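/- arXiv:cs/0508049 — 4 statements merged into one kernel-verified Lean document; each statement's English description precedes it below -/
import Mathlib

section
/- If p = (p₁,…,p_n) is an unscaled pseudo-codeword of H, then p lies in the fundamental cone K(H) (viewing p as a vector in ℝⁿ), and Hpᵀ = 0 over F₂ (that is, Σ_i h_{ji} p_i is even for every row index j, so the mod-2 reduction of p is a codeword of C). -/
/-!
Fix a row `j` of `H`. In the lift, the check node `(j, l)` meets the bit node `(i, σ j i l)` of
every column `i` with `h_{ji} = 1`; call that edge active when `c` is `1` there. Summing the
active edges of column `i` over `l` gives `h_{ji} p_i`, because `σ j i` is a permutation.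
Each check `(j, l)` sees an even number of active edges, so an active edge at column `i` is
accompanied by one at another column: summing over `l` yields the cone inequality
`h_{ji} p_i ≤ ∑_{i' ≠ i} h_{ji'} p_{i'}`, and summing the parities yields `∑_i h_{ji} p_i ≡ 0`.
-/

open Finset

/-- The fundamental cone of a 0-1 matrix `H` (entries in `ZMod 2`, read as reals via `.val`). -/
def InFundCone {R I : Type*} [Fintype I] [DecidableEq I] (H : Matrix R I (ZMod 2)) (ν : I → ℝ) : Prop :=
  (∀ i, 0 ≤ ν i) ∧
  ∀ (j : R) (i : I), ((H j i).val : ℝ) * ν i ≤ ∑ i' ∈ Finset.univ.erase i, ((H j i').val : ℝ) * ν i'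

/-- The `M`-lift of `H` determined by permutations `σ j i`. -/
def matLift {R I : Type*} (H : Matrix R I (ZMod 2)) {M : ℕ} (σ : R → I → Equiv.Perm (Fin M)) :
    Matrix (R × Fin M) (I × Fin M) (ZMod 2) :=
  fun jl ik => if H jl.1 ik.1 = 1 ∧ σ jl.1 ik.1 jl.2 = ik.2 then 1 else 0

/-- `p` is an unscaled pseudo-codeword of `H`. -/
def IsUnscaledPseudoCodeword {R I : Type*} [Fintype R] [Fintype I]
    (H : Matrix R I (ZMod 2)) (p : I → ℕ) : Prop :=
  ∃ M : ℕ, 0 < M ∧ ∃ (σ : R → I → Equiv.Perm (Fin M)) (c : I × Fin M → ZMod 2),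
    (matLift H σ).mulVec c = 0 ∧
    ∀ i, p i = (Finset.univ.filter (fun k : Fin M => c (i, k) = 1)).card

/-- The Tanner graph of `H`: bit nodes = columns, check nodes = rows. -/
def TannerGraph {R I : Type*} (H : Matrix R I (ZMod 2)) : SimpleGraph (I ⊕ R) where
  Adj v w := match v, w with
    | Sum.inl i, Sum.inr j => H j i = 1
    | Sum.inr j, Sum.inl i => H j i = 1
    | _, _ => False
  symm := ⟨by rintro (i | j) (i' | j') h <;> simp_all⟩
  loopless := ⟨by rintro (i | j) h <;> simp_all⟩

/-- `π : W → V` realizes `G'` as an `M`-cover of `G`. -/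
def IsMCover {V W : Type*} (G : SimpleGraph V) (G' : SimpleGraph W) (π : W → V) (M : ℕ) : Prop :=
  Function.Surjective π ∧
  (∀ a b, G'.Adj a b → G.Adj (π a) (π b)) ∧
  (∀ v : V, Nat.card (π ⁻¹' {v}) = M) ∧
  (∀ w : W, Set.BijOn π (G'.neighborSet w) (G.neighborSet (π w)))

lemma zmod_two_eq_zero_or_one (a : ZMod 2) : a = 0 ∨ a = 1 := by
  revert a
  decide

lemma Nat.le_sum_erase_of_even_sum {ι : Type*} [DecidableEq ι] {s : Finset ι} {f : ι → ℕ}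
    {i : ι} (hi : i ∈ s) (hfi : f i ≤ 1) (heven : Even (∑ x ∈ s, f x)) :
    f i ≤ ∑ x ∈ s.erase i, f x := by
  rw [← add_sum_erase s f hi] at heven
  by_contra! hlt
  have hzero : ∑ x ∈ s.erase i, f x = 0 := by omega
  have hone : f i = 1 := by omega
  simp [hzero, hone] at heven

section Lift

variable {R I : Type*} (H : Matrix R I (ZMod 2)) {M : ℕ}
  (σ : R → I → Equiv.Perm (Fin M)) (c : I × Fin M → ZMod 2)

def activeEdge (j : R) (l : Fin M) (i : I) : ℕ :=
  (H j i).val * if c (i, σ j i l) = 1 then 1 else 0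

lemma activeEdge_le_one (j : R) (l : Fin M) (i : I) : activeEdge H σ c j l i ≤ 1 := by
  have hH : (H j i).val ≤ 1 := Nat.le_of_lt_succ (ZMod.val_lt _)
  unfold activeEdge
  split_ifs <;> omega

lemma natCast_activeEdge (j : R) (l : Fin M) (i : I) :
    (activeEdge H σ c j l i : ZMod 2) = H j i * c (i, σ j i l) := by
  rcases zmod_two_eq_zero_or_one (c (i, σ j i l)) with h | h <;> simp [activeEdge, h]

lemma sum_activeEdge (j : R) (i : I) :
    ∑ l, activeEdge H σ c j l i = (H j i).val * #{k | c (i, k) = 1} := by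
  rw [card_filter, mul_sum]
  exact Equiv.sum_comp (σ j i) fun k => (H j i).val * if c (i, k) = 1 then 1 else 0

variable [Fintype I]

lemma matLift_mulVec_apply (j : R) (l : Fin M) :
    ((matLift H σ).mulVec c) (j, l) = ∑ i, H j i * c (i, σ j i l) := by
  simp only [Matrix.mulVec, dotProduct, matLift, Fintype.sum_prod_type]
  refine sum_congr rfl fun i _ => ?_
  rcases zmod_two_eq_zero_or_one (H j i) with h | h <;> simp [h]

lemma even_sum_activeEdge (hc : (matLift H σ).mulVec c = 0) (j : R) (l : Fin M) :
    Even (∑ i, activeEdge H σ c j l i) := by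
  rw [← ZMod.natCast_eq_zero_iff_even, Nat.cast_sum]
  simp only [natCast_activeEdge, ← matLift_mulVec_apply, hc, Pi.zero_apply]

lemma even_sum_val_mul_card (hc : (matLift H σ).mulVec c = 0) (j : R) :
    Even (∑ i, (H j i).val * #{k | c (i, k) = 1}) := by
  have hsum := sum_activeEdge H σ c j
  simp only [← hsum]
  rw [sum_comm]
  exact even_sum _ fun l _ => even_sum_activeEdge H σ c hc j l

variable [DecidableEq I]

lemma val_mul_card_le_sum_erase (hc : (matLift H σ).mulVec c = 0) (j : R) (i : I) :
    (H j i).val * #{k | c (i, k) = 1}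
      ≤ ∑ i' ∈ univ.erase i, (H j i').val * #{k | c (i', k) = 1} := by
  have hsum := sum_activeEdge H σ c j
  simp only [← hsum]
  rw [sum_comm]
  exact sum_le_sum fun l _ => Nat.le_sum_erase_of_even_sum (mem_univ i)
    (activeEdge_le_one H σ c j l i) (even_sum_activeEdge H σ c hc j l)

end Lift

/-- an unscaled pseudo-codeword lies in the fundamental cone and its mod-2
reduction is a codeword. -/
theorem stmt3 {r n : ℕ} (H : Matrix (Fin r) (Fin n) (ZMod 2)) (p : Fin n → ℕ)
    (hp : IsUnscaledPseudoCodeword H p) :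
    InFundCone H (fun i => (p i : ℝ)) ∧
      H.mulVec (fun i => (p i : ZMod 2)) = 0 := by
  obtain ⟨M, -, σ, c, hc, hpc⟩ := hp
  obtain rfl : p = fun i => #{k | c (i, k) = 1} := funext hpc
  refine ⟨⟨fun i => Nat.cast_nonneg _, fun j i => ?_⟩, funext fun j => ?_⟩
  · dsimp only
    exact_mod_cast val_mul_card_le_sum_erase H σ c hc j i
  · have h := (ZMod.natCast_eq_zero_iff_even).mpr (even_sum_val_mul_card H σ c hc j)
    simpa [Matrix.mulVec, dotProduct] using h
end

section
/- Let ν = (ν₁,…,ν_n) ∈ K(H) and let β > 0 be a real number. Define the integer vector p = (p₁,…,p_n) by p_i = 2⌈β ν_i⌉. Then p ∈ K(H), every entry of p is a nonnegative even integer, and Hpᵀ = 0 over F₂. -/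
open Finset

theorem Int.ceil_sum_le {ι R : Type*} [Ring R] [LinearOrder R] [IsStrictOrderedRing R]
    [FloorRing R] (s : Finset ι) (f : ι → R) : ⌈∑ i ∈ s, f i⌉ ≤ ∑ i ∈ s, ⌈f i⌉ :=
  Finset.le_sum_of_subadditive _ Int.ceil_zero.le Int.ceil_add_le s f

theorem ZMod.ceil_val_mul {R : Type*} [Ring R] [LinearOrder R] [IsStrictOrderedRing R]
    [FloorRing R] (a : ZMod 2) (x : R) : ⌈(a.val : R) * x⌉ = a.val * ⌈x⌉ := by
  obtain h | h : a.val = 0 ∨ a.val = 1 := by have := a.val_lt; omega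
  all_goals simp [h]

namespace InFundCone

variable {R I : Type*} [Fintype I] [DecidableEq I] {H : Matrix R I (ZMod 2)} {ν : I → ℝ}

theorem smul (hν : InFundCone H ν) {c : ℝ} (hc : 0 ≤ c) : InFundCone H (c • ν) := by
  refine ⟨fun i => mul_nonneg hc (hν.1 i), fun j i => ?_⟩
  simp only [Pi.smul_apply, smul_eq_mul, mul_left_comm _ c, ← Finset.mul_sum]
  exact mul_le_mul_of_nonneg_left (hν.2 j i) hc

/-- Rounding up preserves the check inequalities because the ceiling is monotone and
subadditive, and commutes with multiplication by a `0`-`1` weight. -/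
theorem ceil (hν : InFundCone H ν) : InFundCone H (fun i => (⌈ν i⌉ : ℝ)) := by
  refine ⟨fun i => Int.cast_nonneg (Int.ceil_nonneg (hν.1 i)), fun j i => ?_⟩
  have h : ((H j i).val : ℤ) * ⌈ν i⌉ ≤ ∑ i' ∈ Finset.univ.erase i, ((H j i').val : ℤ) * ⌈ν i'⌉ :=
    calc ((H j i).val : ℤ) * ⌈ν i⌉ = ⌈((H j i).val : ℝ) * ν i⌉ := (ZMod.ceil_val_mul _ _).symm
      _ ≤ ⌈∑ i' ∈ Finset.univ.erase i, ((H j i').val : ℝ) * ν i'⌉ := Int.ceil_le_ceil (hν.2 j i)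
      _ ≤ ∑ i' ∈ Finset.univ.erase i, ⌈((H j i').val : ℝ) * ν i'⌉ := Int.ceil_sum_le _ _
      _ = _ := by simp only [ZMod.ceil_val_mul]
  simpa using (Int.cast_le (R := ℝ)).2 h

end InFundCone

/-- for `ν` in the fundamental cone and `β > 0`, the vector `p` with
`p i = 2⌈β ν i⌉` lies in the fundamental cone, has nonnegative even entries, and reduces
to a codeword mod 2. -/
theorem stmt7 {r n : ℕ} (H : Matrix (Fin r) (Fin n) (ZMod 2))
    (ν : Fin n → ℝ) (hν : InFundCone H ν) (β : ℝ) (hβ : 0 < β)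
    (p : Fin n → ℤ) (hp : ∀ i, p i = 2 * ⌈β * ν i⌉) :
    InFundCone H (fun i => (p i : ℝ)) ∧
    (∀ i, 0 ≤ p i ∧ Even (p i)) ∧
    H.mulVec (fun i => (p i : ZMod 2)) = 0 := by
  have hcone : InFundCone H (fun i => (p i : ℝ)) := by
    have hp' : (fun i => (p i : ℝ)) = (2 : ℝ) • fun i => (⌈(β • ν) i⌉ : ℝ) := by
      ext i
      simp [hp]
    rw [hp']
    exact ((hν.smul hβ.le).ceil).smul zero_le_two
  have heven : ∀ i, Even (p i) := fun i => hp i ▸ even_two_mul _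
  refine ⟨hcone, fun i => ⟨Int.cast_nonneg_iff.1 (hcone.1 i), heven i⟩, ?_⟩
  have hzero : (fun i => (p i : ZMod 2)) = 0 :=
    funext fun i => ZMod.intCast_eq_zero_iff_even.2 (heven i)
  rw [hzero, Matrix.mulVec_zero]
end

section
/- Suppose every column of H contains exactly two 1's, in distinct rows (so C is a cycle code), and let ζ_N = (det(I − UM))⁻¹ ∈ ℤ[[u₁,…,u_n]] be the edge zeta function of the normal graph N of H, defined via the directed edge matrix M as in the context. Then the Newton polyhedron of ζ_N — the convex cone in ℝⁿ generated by the exponent vectors (p₁,…,p_n) of the monomials u₁^{p₁}···u_n^{p_n} appearing with nonzero coefficient in the power series ζ_N — is exactly the fundamental cone K(H). -/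
/-!
Write `A = UM`; its entries are `0` or a variable, and `ζ_N = det (1 - A)⁻¹`. From
`(1 - A)⁻¹ = 1 + A (1 - A)⁻¹`, the entry `(1 - A)⁻¹_{ab}` has nonnegative coefficients, supported
exactly on the label-count vectors of walks from `a` to `b`. Cramer's rule gives
`ζ(A) = (1 - A)⁻¹_{dd} · ζ(A_d)`, with `A_d` the principal minor at `d`, so by induction on the size
the coefficients of `ζ_N` are nonnegative, positive at the edge-count vector of every closed
non-backtracking walk, and supported in the additive monoid these vectors generate. Hence the Newton
cone is the cone spanned by the edge-count vectors of closed non-backtracking walks.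

Such a vector `p` lies in `K(H)`: at a check `j`, each traversal of an edge `i ∋ j` arrives at or
leaves `j`, arrivals and departures are equinumerous, and as the walk does not backtrack, the
traversals of `i` inject into the visits of `j`, whence `2 p_i ≤ ∑_{i' ∋ j} p_{i'}`. Conversely, for
`0 ≠ ν ∈ K(H)` one can always leave a check along a positive edge so as to use every edge whose
constraint is tight; iterating gives a closed walk whose vector `p` is tight wherever `ν` is.
Subtracting the largest multiple of `p` keeps `ν` in `K(H)` and makes one more constraint tight, so
induction on the number of non-tight constraints writes `ν` as a nonnegative combination of walk
vectors.
-/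
open Finset

/-- The matrix `UM` for the normal graph of a cycle code (see statement 9). -/
noncomputable def normalGraphUM {r n : ℕ} (j₁ j₂ : Fin n → Fin r) :
    Matrix (Fin n × Bool) (Fin n × Bool) (MvPowerSeries (Fin n) ℤ) :=
  fun d d' =>
    if (if d.2 then j₂ d.1 else j₁ d.1) = (if d'.2 then j₁ d'.1 else j₂ d'.1) ∧
        d' ≠ (d.1, !d.2)
    then MvPowerSeries.X d.1 else 0

namespace PointedCone

variable {ι M : Type*} [AddCommGroup M] [Module ℝ M]

lemma mem_dual_range_iff {ℓ : ι → Module.Dual ℝ M} {x : M} :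
    x ∈ dual .id (Set.range ℓ) ↔ ∀ c, 0 ≤ ℓ c x := by
  simp

lemma exists_pos_sub_smul_nonneg [Fintype ι] {ℓ : ι → Module.Dual ℝ M} {x p : M}
    (hx : ∀ c, 0 ≤ ℓ c x) (hp : ∀ c, 0 ≤ ℓ c p) (hp0 : ∃ c, ℓ c p ≠ 0)
    (hface : ∀ c, ℓ c x = 0 → ℓ c p = 0) :
    ∃ t : ℝ, 0 < t ∧ (∀ c, 0 ≤ ℓ c (x - t • p)) ∧
      #{c | ℓ c (x - t • p) ≠ 0} < #{c | ℓ c x ≠ 0} := by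
  obtain ⟨c₁, hc₁⟩ := hp0
  obtain ⟨c₀, hc₀, hmin⟩ := exists_min_image {c | 0 < ℓ c p} (fun c => ℓ c x / ℓ c p)
    ⟨c₁, by simpa using lt_of_le_of_ne (hp c₁) (Ne.symm hc₁)⟩
  rw [mem_filter] at hc₀
  have hxc₀ : 0 < ℓ c₀ x := lt_of_le_of_ne (hx c₀) fun h => (hface c₀ h.symm ▸ hc₀.2).ne rfl
  set t := ℓ c₀ x / ℓ c₀ p
  have hℓ : ∀ c, ℓ c (x - t • p) = ℓ c x - t * ℓ c p := fun c => by simp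
  refine ⟨t, div_pos hxc₀ hc₀.2, fun c => ?_, card_lt_card ⟨fun c => ?_, fun hsub => ?_⟩⟩
  · rw [hℓ, sub_nonneg]
    rcases (hp c).lt_or_eq with hc | hc
    · exact (le_div_iff₀ hc).mp (hmin c (by simpa using hc))
    · simpa [← hc] using hx c
  · simp only [mem_filter, mem_univ, true_and, hℓ]
    intro h h0
    exact h (by rw [h0, hface c h0, mul_zero, sub_zero])
  · have := hsub (by simpa using hxc₀.ne' : c₀ ∈ ({c | ℓ c x ≠ 0} : Finset ι))
    simp [hℓ, t, div_mul_cancel₀ _ hc₀.2.ne'] at this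

theorem dual_range_le_hull [Finite ι] (ℓ : ι → Module.Dual ℝ M) (T : Set M)
    (hsep : ∀ x, (∀ c, ℓ c x = 0) → x = 0)
    (hT : ∀ x ∈ dual .id (Set.range ℓ), x ≠ 0 → ∃ p ∈ T, p ∈ dual .id (Set.range ℓ) ∧ p ≠ 0 ∧
      ∀ c, ℓ c x = 0 → ℓ c p = 0) :
    dual .id (Set.range ℓ) ≤ hull ℝ T := by
  cases nonempty_fintype ι
  intro x hx
  induction hN : #{c | ℓ c x ≠ 0} using Nat.strong_induction_on generalizing x with
  | _ N ih =>
  by_cases hx0 : x = 0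
  · exact hx0 ▸ zero_mem _
  obtain ⟨p, hpT, hp, hp0, hface⟩ := hT x hx hx0
  rw [mem_dual_range_iff] at hx hp
  obtain ⟨t, ht, hx', hlt⟩ := exists_pos_sub_smul_nonneg hx hp
    (by by_contra! h; exact hp0 (hsep p h)) hface
  rw [← sub_add_cancel x (t • p)]
  exact add_mem (ih _ (hN ▸ hlt) (mem_dual_range_iff.mpr hx') rfl)
    (smul_mem _ ht.le (subset_hull hpT))

end PointedCone

namespace MvPowerSeries

variable {σ R : Type*} [CommSemiring R] [PartialOrder R] [IsOrderedRing R]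

def CoeffNonneg (φ : MvPowerSeries σ R) : Prop := ∀ q, 0 ≤ coeff q φ

lemma coeffNonneg_one : (1 : MvPowerSeries σ R).CoeffNonneg := fun q => by
  classical
  rw [coeff_one]
  split_ifs <;> simp

lemma CoeffNonneg.mul {φ ψ : MvPowerSeries σ R} (hφ : φ.CoeffNonneg) (hψ : ψ.CoeffNonneg) :
    (φ * ψ).CoeffNonneg := fun q => by
  classical
  rw [coeff_mul]
  exact sum_nonneg fun ab _ => mul_nonneg (hφ _) (hψ _)

lemma coeff_mul_coeff_le_coeff_add_mul {φ ψ : MvPowerSeries σ R} (hφ : φ.CoeffNonneg)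
    (hψ : ψ.CoeffNonneg) (a b : σ →₀ ℕ) :
    coeff a φ * coeff b ψ ≤ coeff (a + b) (φ * ψ) := by
  classical
  have hmem : (a, b) ∈ antidiagonal (a + b) := mem_antidiagonal.mpr rfl
  rw [coeff_mul]
  exact single_le_sum (f := fun ab : (σ →₀ ℕ) × (σ →₀ ℕ) => coeff ab.1 φ * coeff ab.2 ψ)
    (fun ab _ => mul_nonneg (hφ _) (hψ _)) hmem

end MvPowerSeries

lemma Finsupp.degree_tsub_single_lt {σ : Type*} {q : σ →₀ ℕ} {i : σ} (h : single i 1 ≤ q) :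
    degree (q - single i 1) < degree q := by
  conv_rhs => rw [← tsub_add_cancel_of_le h]
  simp

namespace LabelledDigraph

open MvPowerSeries

variable {V W σ : Type*}

/-- `f a b = some i` encodes an arc `a → b` labelled by the variable `i`, `none` the absence
of an arc. -/
noncomputable def arcMatrix (f : V → V → Option σ) : Matrix V V (MvPowerSeries σ ℤ) :=
  fun a b => (f a b).elim 0 X

inductive IsWalk (f : V → V → Option σ) : V → V → (σ →₀ ℕ) → Prop
  | nil (a : V) : IsWalk f a a 0
  | cons {a b c : V} {i : σ} {q : σ →₀ ℕ} :
      f a b = some i → IsWalk f b c q → IsWalk f a c (Finsupp.single i 1 + q)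

def closedWalkVectors (f : V → V → Option σ) : Set (σ →₀ ℕ) := {q | ∃ a, IsWalk f a a q}

noncomputable def zeta [Fintype V] [DecidableEq V] (f : V → V → Option σ) : MvPowerSeries σ ℤ :=
  Ring.inverse (1 - arcMatrix f).det

variable (f : V → V → Option σ)

lemma IsWalk.map (g : W → V) {a b : W} {q : σ →₀ ℕ}
    (h : IsWalk (fun a b => f (g a) (g b)) a b q) : IsWalk f (g a) (g b) q := by
  induction h with
  | nil a => exact .nil _
  | cons hab _ ih => exact .cons hab ih

lemma closedWalkVectors_comp_subset (g : W → V) :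
    closedWalkVectors (fun a b => f (g a) (g b)) ⊆ closedWalkVectors f :=
  fun _ ⟨a, ha⟩ => ⟨g a, ha.map f g⟩

lemma IsWalk.comp_equiv (e : W ≃ V) {a b : V} {q : σ →₀ ℕ} (h : IsWalk f a b q) :
    IsWalk (fun a b => f (e a) (e b)) (e.symm a) (e.symm b) q := by
  induction h with
  | nil a => exact .nil _
  | cons hab _ ih => exact .cons (by simpa using hab) ih

lemma IsWalk.of_path {L : ℕ} (v : Fin (L + 1) → V) (lab : Fin L → σ)
    (h : ∀ k, f (v k.castSucc) (v k.succ) = some (lab k)) :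
    IsWalk f (v 0) (v (Fin.last L)) (∑ k, Finsupp.single (lab k) 1) := by
  induction L with
  | zero => exact .nil _
  | succ L ih =>
    rw [Fin.sum_univ_succ]
    exact .cons (h 0) (ih (Fin.tail v) (Fin.tail lab) fun k => h k.succ)

lemma IsWalk.exists_path {a b : V} {q : σ →₀ ℕ} (h : IsWalk f a b q) :
    ∃ (L : ℕ) (v : Fin (L + 1) → V) (lab : Fin L → σ), v 0 = a ∧ v (Fin.last L) = b ∧
      (∀ k, f (v k.castSucc) (v k.succ) = some (lab k)) ∧ q = ∑ k, Finsupp.single (lab k) 1 := by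
  induction h with
  | nil a => exact ⟨0, fun _ => a, Fin.elim0, rfl, rfl, fun k => k.elim0, by simp⟩
  | @cons a b c i q hab _ ih =>
    obtain ⟨L, v, lab, hv0, hvL, hstep, rfl⟩ := ih
    refine ⟨L + 1, Fin.cons a v, Fin.cons i lab, rfl, hvL, fun k => ?_, by simp [Fin.sum_univ_succ]⟩
    induction k using Fin.cases with
    | zero => simpa [hv0] using hab
    | succ k => simpa [← Fin.succ_castSucc] using hstep k

lemma one_sub_arcMatrix_comp [DecidableEq V] [DecidableEq W] {g : W → V}
    (hg : Function.Injective g) :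
    1 - arcMatrix (fun a b => f (g a) (g b)) = (1 - arcMatrix f).submatrix g g := by
  ext a b
  simp [Matrix.one_apply, hg.eq_iff, arcMatrix]

lemma coeffNonneg_arcMatrix (a b : V) : (arcMatrix f a b).CoeffNonneg := fun q => by
  classical
  rcases h : f a b with _ | i
  · simp [arcMatrix, h]
  · simp only [arcMatrix, h, Option.elim_some, coeff_X]
    positivity

lemma coeff_arcMatrix_mul_of_eq_some {a c : V} {i : σ} (h : f a c = some i)
    (φ : MvPowerSeries σ ℤ) (q : σ →₀ ℕ) :
    coeff q (arcMatrix f a c * φ) =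
      if Finsupp.single i 1 ≤ q then coeff (q - Finsupp.single i 1) φ else 0 := by
  simp [arcMatrix, h, X_def, coeff_monomial_mul]

lemma coeffNonneg_one_apply [DecidableEq V] (a b : V) :
    ((1 : Matrix V V (MvPowerSeries σ ℤ)) a b).CoeffNonneg := by
  rw [Matrix.one_apply]
  split_ifs
  exacts [coeffNonneg_one, fun q => by simp]

variable [Fintype V] [DecidableEq V]

lemma constantCoeff_det_one_sub_arcMatrix : constantCoeff (1 - arcMatrix f).det = 1 := by
  have h : (constantCoeff : MvPowerSeries σ ℤ →+* ℤ).mapMatrix (1 - arcMatrix f) = 1 := by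
    ext a b
    rcases h : f a b with _ | i <;> simp [arcMatrix, h, Matrix.one_apply, apply_ite]
  rw [RingHom.map_det, h, Matrix.det_one]

lemma isUnit_det_one_sub_arcMatrix : IsUnit (1 - arcMatrix f).det := by
  rw [isUnit_iff_constantCoeff, constantCoeff_det_one_sub_arcMatrix]
  exact isUnit_one

lemma zeta_mul_det : zeta f * (1 - arcMatrix f).det = 1 :=
  Ring.inverse_mul_cancel _ (isUnit_det_one_sub_arcMatrix f)

lemma eq_zeta_of_mul_det_eq_one {ζ : MvPowerSeries σ ℤ} (h : ζ * (1 - arcMatrix f).det = 1) :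
    ζ = zeta f :=
  left_inv_eq_right_inv h (Ring.mul_inverse_cancel _ (isUnit_det_one_sub_arcMatrix f))

lemma constantCoeff_zeta : constantCoeff (zeta f) = 1 := by
  simpa [constantCoeff_det_one_sub_arcMatrix] using congrArg constantCoeff (zeta_mul_det f)

lemma zeta_comp_equiv [Fintype W] [DecidableEq W] (e : W ≃ V) :
    zeta (fun a b => f (e a) (e b)) = zeta f := by
  rw [zeta, one_sub_arcMatrix_comp f e.injective, Matrix.det_submatrix_equiv_self, zeta]

lemma inv_one_sub_arcMatrix_eq :
    (1 - arcMatrix f)⁻¹ = 1 + arcMatrix f * (1 - arcMatrix f)⁻¹ := by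
  have h := Matrix.mul_nonsing_inv _ (isUnit_det_one_sub_arcMatrix f)
  rw [sub_mul, one_mul, sub_eq_iff_eq_add] at h
  exact h

lemma coeff_inv_one_sub_arcMatrix (q : σ →₀ ℕ) (a b : V) :
    coeff q ((1 - arcMatrix f)⁻¹ a b) =
      coeff q ((1 : Matrix V V (MvPowerSeries σ ℤ)) a b) +
        ∑ c, coeff q (arcMatrix f a c * (1 - arcMatrix f)⁻¹ c b) := by
  conv_lhs => rw [inv_one_sub_arcMatrix_eq]
  simp [Matrix.mul_apply]

lemma coeffNonneg_inv_one_sub_arcMatrix (a b : V) :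
    ((1 - arcMatrix f)⁻¹ a b).CoeffNonneg := by
  intro q
  induction hN : Finsupp.degree q using Nat.strong_induction_on generalizing q a with
  | _ N ih =>
  rw [coeff_inv_one_sub_arcMatrix]
  refine add_nonneg (coeffNonneg_one_apply a b q) (sum_nonneg fun c _ => ?_)
  rcases h : f a c with _ | i
  · simp [arcMatrix, h]
  · rw [coeff_arcMatrix_mul_of_eq_some f h]
    split_ifs with hi
    · exact ih _ (hN ▸ Finsupp.degree_tsub_single_lt hi) _ _ rfl
    · rfl

lemma isWalk_of_coeff_inv_one_sub_arcMatrix_ne_zero {q : σ →₀ ℕ} {a b : V}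
    (h : coeff q ((1 - arcMatrix f)⁻¹ a b) ≠ 0) : IsWalk f a b q := by
  induction hN : Finsupp.degree q using Nat.strong_induction_on generalizing q a with
  | _ N ih =>
  rw [coeff_inv_one_sub_arcMatrix] at h
  by_cases hsum : ∑ c, coeff q (arcMatrix f a c * (1 - arcMatrix f)⁻¹ c b) = 0
  · classical
    rw [hsum, add_zero, Matrix.one_apply] at h
    split_ifs at h with hab
    · rw [coeff_one, ne_eq, ite_eq_right_iff, Classical.not_imp] at h
      obtain ⟨rfl, -⟩ := h
      exact hab ▸ .nil a
    · simp at h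
  obtain ⟨c, -, hc⟩ := exists_ne_zero_of_sum_ne_zero hsum
  rcases hf : f a c with _ | i
  · simp [arcMatrix, hf] at hc
  rw [coeff_arcMatrix_mul_of_eq_some f hf, ne_eq, ite_eq_right_iff, Classical.not_imp] at hc
  obtain ⟨hi, hc⟩ := hc
  have hwalk := IsWalk.cons hf (ih _ (hN ▸ Finsupp.degree_tsub_single_lt hi) hc rfl)
  rwa [add_tsub_cancel_of_le hi] at hwalk

lemma IsWalk.one_le_coeff_inv_one_sub_arcMatrix {q : σ →₀ ℕ} {a b : V} (h : IsWalk f a b q) :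
    1 ≤ coeff q ((1 - arcMatrix f)⁻¹ a b) := by
  have hterm : ∀ q a b c, 0 ≤ coeff q (arcMatrix f a c * (1 - arcMatrix f)⁻¹ c b) :=
    fun q a b c => ((coeffNonneg_arcMatrix f a c).mul (coeffNonneg_inv_one_sub_arcMatrix f c b)) q
  induction h with
  | nil a =>
    rw [coeff_inv_one_sub_arcMatrix, Matrix.one_apply_eq, coeff_zero_one]
    exact le_add_of_nonneg_right (sum_nonneg fun c _ => hterm _ _ _ _)
  | @cons a b c i q hab _ ih =>
    rw [coeff_inv_one_sub_arcMatrix]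
    refine le_add_of_nonneg_of_le (coeffNonneg_one_apply a c _) (le_trans ?_
      (single_le_sum (fun c _ => hterm _ _ _ c) (mem_univ b)))
    rwa [coeff_arcMatrix_mul_of_eq_some f hab, if_pos le_self_add, add_tsub_cancel_left]

section Fin

variable {m : ℕ}

lemma det_mul_inv_one_sub_arcMatrix_self (f : Fin (m + 1) → Fin (m + 1) → Option σ)
    (d : Fin (m + 1)) :
    (1 - arcMatrix f).det * (1 - arcMatrix f)⁻¹ d d =
      (1 - arcMatrix (fun a b => f (d.succAbove a) (d.succAbove b))).det := by
  rw [Matrix.inv_def, Matrix.smul_apply, smul_eq_mul,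
    Ring.mul_inverse_cancel_left _ _ (isUnit_det_one_sub_arcMatrix f),
    Matrix.adjugate_fin_succ_eq_det_submatrix, Even.neg_one_pow ⟨_, rfl⟩, one_mul,
    one_sub_arcMatrix_comp f Fin.succAbove_right_injective]

lemma zeta_eq_inv_one_sub_arcMatrix_mul_zeta (f : Fin (m + 1) → Fin (m + 1) → Option σ)
    (d : Fin (m + 1)) :
    zeta f = (1 - arcMatrix f)⁻¹ d d * zeta (fun a b => f (d.succAbove a) (d.succAbove b)) := by
  set f' := fun a b => f (d.succAbove a) (d.succAbove b)
  set G := (1 - arcMatrix f)⁻¹ d d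
  linear_combination (-zeta f) * zeta_mul_det f' + (G * zeta f') * zeta_mul_det f -
    (zeta f * zeta f') * det_mul_inv_one_sub_arcMatrix_self f d

lemma zeta_fin_zero (f : Fin 0 → Fin 0 → Option σ) : zeta f = 1 := by
  rw [zeta, Matrix.det_fin_zero, Ring.inverse_one]

theorem coeffNonneg_zeta_fin : ∀ {m : ℕ} (f : Fin m → Fin m → Option σ), (zeta f).CoeffNonneg
  | 0, f => zeta_fin_zero f ▸ coeffNonneg_one
  | _ + 1, f => by
    rw [zeta_eq_inv_one_sub_arcMatrix_mul_zeta f 0]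
    exact (coeffNonneg_inv_one_sub_arcMatrix f 0 0).mul (coeffNonneg_zeta_fin _)

theorem IsWalk.coeff_zeta_pos_fin {f : Fin m → Fin m → Option σ} {d : Fin m} {q : σ →₀ ℕ}
    (h : IsWalk f d d q) : 0 < coeff q (zeta f) := by
  cases m with
  | zero => exact d.elim0
  | succ m =>
  set f' := fun a b => f (d.succAbove a) (d.succAbove b)
  rw [zeta_eq_inv_one_sub_arcMatrix_mul_zeta f d]
  calc 0 < coeff q ((1 - arcMatrix f)⁻¹ d d) * coeff 0 (zeta f') := by
        rw [coeff_zero_eq_constantCoeff_apply, constantCoeff_zeta, mul_one]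
        exact h.one_le_coeff_inv_one_sub_arcMatrix f
    _ ≤ coeff (q + 0) ((1 - arcMatrix f)⁻¹ d d * zeta f') :=
        coeff_mul_coeff_le_coeff_add_mul (coeffNonneg_inv_one_sub_arcMatrix f d d)
          (coeffNonneg_zeta_fin f') q 0
    _ = _ := by rw [add_zero]

theorem mem_closure_of_coeff_zeta_ne_zero_fin :
    ∀ {m : ℕ} (f : Fin m → Fin m → Option σ) {q : σ →₀ ℕ}, coeff q (zeta f) ≠ 0 →
      q ∈ AddSubmonoid.closure (closedWalkVectors f)
  | 0, f, q, h => by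
    classical
    rw [zeta_fin_zero, coeff_one, ne_eq, ite_eq_right_iff, Classical.not_imp] at h
    exact h.1 ▸ zero_mem _
  | _ + 1, f, q, h => by
    classical
    rw [zeta_eq_inv_one_sub_arcMatrix_mul_zeta f 0, coeff_mul] at h
    obtain ⟨⟨a, b⟩, hab, hne⟩ := exists_ne_zero_of_sum_ne_zero h
    rw [HasAntidiagonal.mem_antidiagonal] at hab
    subst hab
    refine add_mem (AddSubmonoid.subset_closure
      ⟨0, isWalk_of_coeff_inv_one_sub_arcMatrix_ne_zero f (left_ne_zero_of_mul hne)⟩) ?_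
    exact AddSubmonoid.closure_mono (closedWalkVectors_comp_subset f _)
      (mem_closure_of_coeff_zeta_ne_zero_fin _ (right_ne_zero_of_mul hne))

end Fin

theorem IsWalk.coeff_zeta_pos {d : V} {q : σ →₀ ℕ} (h : IsWalk f d d q) :
    0 < coeff q (zeta f) := by
  rw [← zeta_comp_equiv f (Fintype.equivFin V).symm]
  exact (h.comp_equiv f _).coeff_zeta_pos_fin

theorem mem_closure_of_coeff_zeta_ne_zero {q : σ →₀ ℕ} (h : coeff q (zeta f) ≠ 0) :
    q ∈ AddSubmonoid.closure (closedWalkVectors f) := by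
  rw [← zeta_comp_equiv f (Fintype.equivFin V).symm] at h
  exact AddSubmonoid.closure_mono (closedWalkVectors_comp_subset f _)
    (mem_closure_of_coeff_zeta_ne_zero_fin _ h)

end LabelledDigraph

lemma apply_castSucc_finRotate {α : Type*} {L : ℕ} {v : Fin (L + 1) → α}
    (hv : v (Fin.last L) = v 0) (k : Fin L) : v (finRotate L k).castSucc = v k.succ := by
  cases L with
  | zero => exact k.elim0
  | succ L =>
    by_cases hk : k = Fin.last L
    · subst hk
      simpa [finRotate_last] using hv.symm
    · congr 1
      ext
      rw [Fin.val_castSucc, Fin.val_succ, coe_finRotate_of_ne_last hk]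

theorem exists_closed_path_of_forall_exists {α : Type*} [Finite α] (R : α → α → Prop)
    (h : ∀ a, ∃ b, R a b) (a₀ : α) :
    ∃ (L : ℕ) (v : Fin (L + 1) → α), 0 < L ∧ v (Fin.last L) = v 0 ∧
      ∀ k : Fin L, R (v k.castSucc) (v k.succ) := by
  choose next hnext using h
  set u : ℕ → α := fun k => next^[k] a₀
  have hu : ∀ k, R (u k) (u (k + 1)) := fun k => by
    simpa only [u, Function.iterate_succ_apply'] using hnext (u k)
  have key : ∀ a b, a < b → u a = u b → ∃ (L : ℕ) (v : Fin (L + 1) → α), 0 < L ∧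
      v (Fin.last L) = v 0 ∧ ∀ k : Fin L, R (v k.castSucc) (v k.succ) := fun a b hab heq =>
    ⟨b - a, fun k => u (a + k), by omega, by simpa [Nat.add_sub_cancel' hab.le] using heq.symm,
      fun k => by simpa [add_assoc] using hu (a + k)⟩
  obtain ⟨a, b, hne, heq⟩ := Finite.exists_ne_map_eq_of_infinite u
  rcases hne.lt_or_gt with hab | hab
  exacts [key a b hab heq, key b a hab heq.symm]

namespace NormalGraph

open LabelledDigraph MvPowerSeries

variable {V E : Type*} (j₁ j₂ : E → V)

/- `(i, true)` and `(i, false)` are the darts `(i, +)` and `(i, -)`. -/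
def dartTail (d : E × Bool) : V := if d.2 then j₁ d.1 else j₂ d.1

def dartHead (d : E × Bool) : V := if d.2 then j₂ d.1 else j₁ d.1

def Follows (d d' : E × Bool) : Prop := dartHead j₁ j₂ d = dartTail j₁ j₂ d' ∧ d' ≠ (d.1, !d.2)

instance [DecidableEq V] [DecidableEq E] : DecidableRel (Follows j₁ j₂) :=
  fun _ _ => instDecidableAnd

def dartLabel [DecidableEq V] [DecidableEq E] (d d' : E × Bool) : Option E :=
  if Follows j₁ j₂ d d' then some d.1 else none

lemma arcMatrix_dartLabel {r n : ℕ} (j₁ j₂ : Fin n → Fin r) :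
    arcMatrix (dartLabel j₁ j₂) = normalGraphUM j₁ j₂ := by
  ext d d' : 2
  unfold arcMatrix dartLabel normalGraphUM Follows dartHead dartTail
  split_ifs <;> rfl

variable {j₁ j₂}

lemma dartLabel_eq_some_iff [DecidableEq V] [DecidableEq E] {d d' : E × Bool} {i : E} :
    dartLabel j₁ j₂ d d' = some i ↔ Follows j₁ j₂ d d' ∧ d.1 = i := by
  unfold dartLabel
  split_ifs with h <;> simp [h]

lemma dartHead_ne_dartTail (hj : ∀ i, j₁ i ≠ j₂ i) (d : E × Bool) :
    dartHead j₁ j₂ d ≠ dartTail j₁ j₂ d := by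
  rcases d with ⟨i, _ | _⟩
  exacts [(hj i), (hj i).symm]

lemma Follows.eq_of_fst_eq {d d' : E × Bool} (h : Follows j₁ j₂ d d') (hdd' : d.1 = d'.1) :
    d' = d := by
  rcases d with ⟨i, b⟩
  rcases d' with ⟨i', b'⟩
  obtain rfl : i = i' := hdd'
  cases b <;> cases b' <;> simp_all [Follows]

section Cone

variable (j₁ j₂) [DecidableEq V] [Fintype E]

def incidentEdges (j : V) : Finset E := {i | j = j₁ i ∨ j = j₂ i}

variable {j₁ j₂}

lemma mem_incidentEdges_iff (j : V) (d : E × Bool) :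
    d.1 ∈ incidentEdges j₁ j₂ j ↔ dartHead j₁ j₂ d = j ∨ dartTail j₁ j₂ d = j := by
  rcases d with ⟨i, _ | _⟩ <;> simp [incidentEdges, dartHead, dartTail, eq_comm, or_comm]

lemma exists_dartTail_eq {j : V} {i : E} (hi : i ∈ incidentEdges j₁ j₂ j) :
    ∃ d : E × Bool, d.1 = i ∧ dartTail j₁ j₂ d = j := by
  simp only [incidentEdges, mem_filter, mem_univ, true_and] at hi
  rcases hi with rfl | rfl
  exacts [⟨(i, true), rfl, rfl⟩, ⟨(i, false), rfl, rfl⟩]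

variable (j₁ j₂) [DecidableEq E]

/- `inr i` is the constraint `0 ≤ ν i`; `inl (j, i)` is the constraint of check `j` at column `i`,
which for `i ∈ incidentEdges j` reads `ν i ≤ ∑_{i' ∈ incidentEdges j, i' ≠ i} ν i'`. -/
def slack : (V × E) ⊕ E → Module.Dual ℝ (E → ℝ)
  | .inl (j, i) => ∑ i' ∈ incidentEdges j₁ j₂ j, LinearMap.proj i' -
      if i ∈ incidentEdges j₁ j₂ j then 2 • LinearMap.proj i else 0
  | .inr i => LinearMap.proj i

def fundamentalCone : PointedCone ℝ (E → ℝ) := PointedCone.dual .id (Set.range (slack j₁ j₂))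

variable {j₁ j₂}

lemma slack_inl_apply (j : V) (i : E) (ν : E → ℝ) :
    slack j₁ j₂ (.inl (j, i)) ν =
      ∑ i' ∈ incidentEdges j₁ j₂ j, ν i' - if i ∈ incidentEdges j₁ j₂ j then 2 * ν i else 0 := by
  simp only [slack]
  split_ifs <;> simp

lemma slack_inr_apply (i : E) (ν : E → ℝ) : slack j₁ j₂ (.inr i) ν = ν i := rfl

lemma mem_fundamentalCone_iff {ν : E → ℝ} : ν ∈ fundamentalCone j₁ j₂ ↔ ∀ c, 0 ≤ slack j₁ j₂ c ν :=
  PointedCone.mem_dual_range_iff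

end Cone

section Cycle

/- Below, `W` together with a permutation `s` such that `Follows (W k) (W (s k))` for all `k`
encodes a disjoint union of closed non-backtracking walks. -/
variable [DecidableEq V] {ι : Type*} [Fintype ι] (W : ι → E × Bool)

noncomputable def edgeVec : E →₀ ℕ := ∑ k, Finsupp.single (W k).1 1

lemma edgeVec_apply [DecidableEq E] (i : E) : edgeVec W i = #{k | (W k).1 = i} := by
  simp only [edgeVec, Finsupp.coe_finsetSum, Finset.sum_apply, Finsupp.single_apply, card_filter]

variable {W} {s : Equiv.Perm ι}

lemma card_dartHead_eq_card_dartTail (hW : ∀ k, Follows j₁ j₂ (W k) (W (s k))) (j : V) :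
    #{k | dartHead j₁ j₂ (W k) = j} = #{k | dartTail j₁ j₂ (W k) = j} := by
  simp only [card_filter, (hW _).1]
  exact Equiv.sum_comp s fun k => if dartTail j₁ j₂ (W k) = j then 1 else 0

lemma sum_edgeVec_incidentEdges [Fintype E] [DecidableEq E] (hj : ∀ i, j₁ i ≠ j₂ i)
    (hW : ∀ k, Follows j₁ j₂ (W k) (W (s k))) (j : V) :
    ∑ i ∈ incidentEdges j₁ j₂ j, edgeVec W i = 2 * #{k | dartHead j₁ j₂ (W k) = j} := by
  have hsplit : ∀ k, (if (W k).1 ∈ incidentEdges j₁ j₂ j then 1 else 0) =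
      (if dartHead j₁ j₂ (W k) = j then 1 else 0) + (if dartTail j₁ j₂ (W k) = j then 1 else 0) :=
    fun k => by
      have hne := dartHead_ne_dartTail hj (W k)
      by_cases h₁ : dartHead j₁ j₂ (W k) = j <;> by_cases h₂ : dartTail j₁ j₂ (W k) = j <;>
        simp_all [mem_incidentEdges_iff]
  simp only [edgeVec_apply, card_filter]
  rw [sum_comm]
  simp only [sum_ite_eq, hsplit, sum_add_distrib, ← card_filter]
  rw [← card_dartHead_eq_card_dartTail hW, two_mul]

lemma edgeVec_le_card_dartHead [Fintype E] [DecidableEq E]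
    (hW : ∀ k, Follows j₁ j₂ (W k) (W (s k))) {j : V} {i : E} (hi : i ∈ incidentEdges j₁ j₂ j) :
    edgeVec W i ≤ #{k | dartHead j₁ j₂ (W k) = j} := by
  rw [edgeVec_apply]
  refine card_le_card_of_injOn (fun k => if dartHead j₁ j₂ (W k) = j then k else s.symm k)
    (fun k hk => ?_) (fun k₁ hk₁ k₂ hk₂ h => ?_)
  · simp only [coe_filter, mem_univ, true_and, Set.mem_ofPred_eq] at hk ⊢
    split_ifs with hhead
    · exact hhead
    · have htail : dartTail j₁ j₂ (W k) = j :=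
        ((mem_incidentEdges_iff j (W k)).1 (hk ▸ hi)).resolve_left hhead
      rw [(hW _).1, Equiv.apply_symm_apply, htail]
  · simp only [coe_filter, mem_univ, true_and, Set.mem_ofPred_eq] at hk₁ hk₂
    have mixed : ∀ a b, (W a).1 = i → (W b).1 = i → dartHead j₁ j₂ (W a) = j →
        dartHead j₁ j₂ (W b) ≠ j → a ≠ s.symm b := by
      rintro a b ha hb ha' hb' rfl
      have hstep := hW (s.symm b)
      rw [Equiv.apply_symm_apply] at hstep
      exact hb' (hstep.eq_of_fst_eq (ha.trans hb.symm) ▸ ha')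
    dsimp only at h
    split_ifs at h with h₁ h₂ h₂
    · exact h
    · exact absurd h (mixed _ _ hk₁ hk₂ h₁ h₂)
    · exact absurd h.symm (mixed _ _ hk₂ hk₁ h₂ h₁)
    · exact s.symm.injective h

lemma card_dartHead_le_edgeVec [DecidableEq E] (hj : ∀ i, j₁ i ≠ j₂ i)
    (hW : ∀ k, Follows j₁ j₂ (W k) (W (s k))) {j : V} {i : E}
    (hvisit : ∀ k, dartHead j₁ j₂ (W k) = j → (W k).1 = i ∨ (W (s k)).1 = i) :
    #{k | dartHead j₁ j₂ (W k) = j} ≤ edgeVec W i := by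
  rw [edgeVec_apply]
  refine card_le_card_of_injOn (fun k => if (W k).1 = i then k else s k)
    (fun k hk => ?_) (fun k₁ hk₁ k₂ hk₂ h => ?_)
  · simp only [coe_filter, mem_univ, true_and, Set.mem_ofPred_eq] at hk ⊢
    split_ifs with hedge
    · exact hedge
    · exact (hvisit k hk).resolve_left hedge
  · simp only [coe_filter, mem_univ, true_and, Set.mem_ofPred_eq] at hk₁ hk₂
    have mixed : ∀ a b, dartHead j₁ j₂ (W a) = j → dartHead j₁ j₂ (W b) = j → a ≠ s b := by
      rintro a b ha hb rfl
      exact dartHead_ne_dartTail hj (W (s b)) (ha.trans (hb.symm.trans (hW b).1))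
    dsimp only at h
    split_ifs at h
    · exact h
    · exact absurd h (mixed _ _ hk₁ hk₂)
    · exact absurd h.symm (mixed _ _ hk₂ hk₁)
    · exact s.injective h

end Cycle

section WalkCone

variable [DecidableEq V] [Fintype E] [DecidableEq E]

theorem edgeVec_mem_fundamentalCone {ι : Type*} [Fintype ι] {W : ι → E × Bool}
    {s : Equiv.Perm ι} (hj : ∀ i, j₁ i ≠ j₂ i) (hW : ∀ k, Follows j₁ j₂ (W k) (W (s k))) :
    (fun i => (edgeVec W i : ℝ)) ∈ fundamentalCone j₁ j₂ := by
  rw [mem_fundamentalCone_iff]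
  rintro (⟨j, i⟩ | i)
  · have hsum : ∑ i' ∈ incidentEdges j₁ j₂ j, (edgeVec W i' : ℝ) =
        2 * #{k | dartHead j₁ j₂ (W k) = j} := by
      exact_mod_cast sum_edgeVec_incidentEdges hj hW j
    rw [slack_inl_apply, hsum, sub_nonneg]
    split_ifs with hi
    · exact_mod_cast Nat.mul_le_mul_left 2 (edgeVec_le_card_dartHead hW hi)
    · positivity
  · exact Nat.cast_nonneg _

variable (j₁ j₂) in
def FollowsTight (ν : E → ℝ) (d d' : E × Bool) : Prop :=
  Follows j₁ j₂ d d' ∧ ∀ i ∈ incidentEdges j₁ j₂ (dartHead j₁ j₂ d),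
    slack j₁ j₂ (.inl (dartHead j₁ j₂ d, i)) ν = 0 → d.1 = i ∨ d'.1 = i

theorem slack_edgeVec_eq_zero {ι : Type*} [Fintype ι] {W : ι → E × Bool} {s : Equiv.Perm ι}
    (hj : ∀ i, j₁ i ≠ j₂ i) {ν : E → ℝ} (hν : ν ∈ fundamentalCone j₁ j₂)
    (hpos : ∀ k, 0 < ν (W k).1) (hW : ∀ k, FollowsTight j₁ j₂ ν (W k) (W (s k)))
    {c : (V × E) ⊕ E} (hc : slack j₁ j₂ c ν = 0) :
    slack j₁ j₂ c (fun i => (edgeVec W i : ℝ)) = 0 := by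
  have hzero : ∀ i, ν i = 0 → edgeVec W i = 0 := fun i hi => by
    rw [edgeVec_apply, card_eq_zero, filter_eq_empty_iff]
    rintro k - rfl
    exact (hpos k).ne' hi
  have hnn : ∀ i, 0 ≤ ν i := fun i => (mem_fundamentalCone_iff.1 hν) (.inr i)
  rcases c with ⟨j, i⟩ | i
  · rw [slack_inl_apply]
    by_cases hi : i ∈ incidentEdges j₁ j₂ j
    · have heq : edgeVec W i = #{k | dartHead j₁ j₂ (W k) = j} :=
        le_antisymm (edgeVec_le_card_dartHead (fun k => (hW k).1) hi)
          (card_dartHead_le_edgeVec hj (fun k => (hW k).1) fun k hk =>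
            (hW k).2 i (hk ▸ hi) (hk ▸ hc))
      have hsum : ∑ i' ∈ incidentEdges j₁ j₂ j, (edgeVec W i' : ℝ) =
          2 * #{k | dartHead j₁ j₂ (W k) = j} := by
        exact_mod_cast sum_edgeVec_incidentEdges hj (fun k => (hW k).1) j
      rw [if_pos hi, hsum, heq, sub_self]
    · rw [slack_inl_apply, if_neg hi, sub_zero, sum_eq_zero_iff_of_nonneg fun i _ => hnn i] at hc
      rw [if_neg hi, sub_zero]
      exact sum_eq_zero fun i' hi' => by rw [hzero i' (hc i' hi'), Nat.cast_zero]
  · rw [slack_inr_apply] at hc ⊢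
    rw [hzero i hc, Nat.cast_zero]

theorem exists_followsTight {ν : E → ℝ} (hν : ν ∈ fundamentalCone j₁ j₂) {d : E × Bool}
    (hd : 0 < ν d.1) : ∃ d', 0 < ν d'.1 ∧ FollowsTight j₁ j₂ ν d d' := by
  rw [mem_fundamentalCone_iff] at hν
  set j := dartHead j₁ j₂ d
  set R := (incidentEdges j₁ j₂ j).erase d.1
  have hd_mem : d.1 ∈ incidentEdges j₁ j₂ j := (mem_incidentEdges_iff j d).2 (.inl rfl)
  have hsum : ∑ i ∈ incidentEdges j₁ j₂ j, ν i = ν d.1 + ∑ i ∈ R, ν i :=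
    (add_sum_erase _ _ hd_mem).symm
  have hd_le : ν d.1 ≤ ∑ i ∈ R, ν i := by
    have := hν (.inl (j, d.1))
    rw [slack_inl_apply, if_pos hd_mem, hsum] at this
    linarith
  have hR : R.Nonempty := by
    rw [nonempty_iff_ne_empty]
    rintro hR
    rw [hR, sum_empty] at hd_le
    linarith
  obtain ⟨i', hi'R, hmax⟩ := R.exists_max_image ν hR
  have hi'pos : 0 < ν i' := by
    by_contra! h
    linarith [sum_nonpos fun i hi => (hmax i hi).trans h]
  obtain ⟨hi'd, hi'⟩ := mem_erase.1 hi'R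
  obtain ⟨d', rfl, hd'⟩ := exists_dartTail_eq hi'
  refine ⟨d', hi'pos, ⟨hd'.symm, fun h => hi'd (by rw [h])⟩, fun i hi htight => ?_⟩
  by_contra! hne
  have hiR : i ∈ R := mem_erase.2 ⟨Ne.symm hne.1, hi⟩
  have htwo : ν i + ν d'.1 ≤ ∑ i ∈ R, ν i :=
    add_le_sum (fun i _ => hν (.inr i)) hiR hi'R (Ne.symm hne.2)
  rw [slack_inl_apply, if_pos hi, hsum] at htight
  linarith [hmax i hiR]

end WalkCone

section Zeta

variable [DecidableEq V] [Fintype E] [DecidableEq E]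

theorem cast_mem_fundamentalCone_of_isWalk (hj : ∀ i, j₁ i ≠ j₂ i) {d : E × Bool} {q : E →₀ ℕ}
    (h : IsWalk (dartLabel j₁ j₂) d d q) : (fun i => (q i : ℝ)) ∈ fundamentalCone j₁ j₂ := by
  obtain ⟨L, v, lab, hv0, hvL, hstep, rfl⟩ := h.exists_path
  simp only [dartLabel_eq_some_iff] at hstep
  have hq : ∑ k, Finsupp.single (lab k) 1 = edgeVec fun k : Fin L => v k.castSucc := by
    simp only [edgeVec, (hstep _).2]
  rw [hq]
  refine edgeVec_mem_fundamentalCone hj (s := finRotate L) fun k => ?_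
  rw [apply_castSucc_finRotate (hvL.trans hv0.symm)]
  exact (hstep k).1

theorem exists_coeff_zeta_pos_of_mem_fundamentalCone (hj : ∀ i, j₁ i ≠ j₂ i) {ν : E → ℝ}
    (hν : ν ∈ fundamentalCone j₁ j₂) (hν0 : ν ≠ 0) :
    ∃ q : E →₀ ℕ, 0 < coeff q (zeta (dartLabel j₁ j₂)) ∧
      (fun i => (q i : ℝ)) ∈ fundamentalCone j₁ j₂ ∧ (fun i => (q i : ℝ)) ≠ 0 ∧
      ∀ c, slack j₁ j₂ c ν = 0 → slack j₁ j₂ c (fun i => (q i : ℝ)) = 0 := by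
  have hnn : ∀ i, 0 ≤ ν i := fun i => mem_fundamentalCone_iff.1 hν (.inr i)
  obtain ⟨i₀, hi₀⟩ : ∃ i, 0 < ν i := by
    by_contra! h
    exact hν0 (funext fun i => le_antisymm (h i) (hnn i))
  obtain ⟨L, v, hL, hvL, hstep⟩ := exists_closed_path_of_forall_exists
    (fun a b : {d : E × Bool // 0 < ν d.1} => FollowsTight j₁ j₂ ν a.1 b.1)
    (fun a => by
      obtain ⟨d', hd', h⟩ := exists_followsTight hν a.2
      exact ⟨⟨d', hd'⟩, h⟩)
    ⟨(i₀, true), hi₀⟩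
  set W : Fin L → E × Bool := fun k => (v k.castSucc).1
  have hW : ∀ k, FollowsTight j₁ j₂ ν (W k) (W (finRotate L k)) := fun k => by
    simp only [W, apply_castSucc_finRotate hvL]
    exact hstep k
  have hwalk : IsWalk (dartLabel j₁ j₂) (v 0).1 (v 0).1 (edgeVec W) := by
    have := IsWalk.of_path (dartLabel j₁ j₂) (fun k => (v k).1) (fun k => (W k).1)
      fun k => dartLabel_eq_some_iff.2 ⟨(hstep k).1, rfl⟩
    rwa [hvL] at this
  refine ⟨edgeVec W, hwalk.coeff_zeta_pos, edgeVec_mem_fundamentalCone hj fun k => (hW k).1,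
    fun h => ?_, fun c hc => slack_edgeVec_eq_zero hj hν (fun k => (v _).2) hW hc⟩
  have := congrFun h (W ⟨0, hL⟩).1
  simp only [edgeVec_apply, Pi.zero_apply, Nat.cast_eq_zero, card_eq_zero,
    filter_eq_empty_iff] at this
  exact this (mem_univ _) rfl

theorem hull_support_zeta_eq_fundamentalCone [Finite V] (hj : ∀ i, j₁ i ≠ j₂ i) :
    PointedCone.hull ℝ {x : E → ℝ | ∃ p : E → ℕ,
      coeff (Finsupp.equivFunOnFinite.symm p) (zeta (dartLabel j₁ j₂)) ≠ 0 ∧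
        x = fun i => (p i : ℝ)} = fundamentalCone j₁ j₂ := by
  apply le_antisymm
  · rw [PointedCone.hull, Submodule.span_le]
    rintro _ ⟨p, hp, rfl⟩
    suffices ∀ q ∈ AddSubmonoid.closure (closedWalkVectors (dartLabel j₁ j₂)),
        (fun i => (q i : ℝ)) ∈ fundamentalCone j₁ j₂ by
      simpa using this _ (mem_closure_of_coeff_zeta_ne_zero _ hp)
    intro q hq
    induction hq using AddSubmonoid.closure_induction with
    | mem q hq =>
      obtain ⟨d, hd⟩ := hq
      exact cast_mem_fundamentalCone_of_isWalk hj hd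
    | zero =>
      convert zero_mem (fundamentalCone j₁ j₂) using 1
      ext
      simp
    | add q₁ q₂ _ _ h₁ h₂ =>
      convert add_mem h₁ h₂ using 1
      ext
      simp
  · refine PointedCone.dual_range_le_hull _ _ (fun x hx => funext fun i => hx (.inr i))
      fun ν hν hν0 => ?_
    obtain ⟨q, hq, hqK, hq0, hface⟩ := exists_coeff_zeta_pos_of_mem_fundamentalCone hj hν hν0
    exact ⟨_, ⟨q, by simpa using hq.ne', rfl⟩, hqK, hq0, hface⟩

end Zeta

theorem inFundCone_iff_mem_fundamentalCone [DecidableEq V] [Fintype E] [DecidableEq E]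
    {H : Matrix V E (ZMod 2)} (hH : ∀ j i, H j i = 1 ↔ (j = j₁ i ∨ j = j₂ i)) {ν : E → ℝ} :
    InFundCone H ν ↔ ν ∈ fundamentalCone j₁ j₂ := by
  have hval : ∀ j i, ((H j i).val : ℝ) = if i ∈ incidentEdges j₁ j₂ j then 1 else 0 := by
    intro j i
    have hbit : ∀ x : ZMod 2, x = 0 ∨ x = 1 := by decide
    simp only [incidentEdges, mem_filter, mem_univ, true_and, ← hH]
    rcases hbit (H j i) with h | h <;> simp [h, -ZMod.natCast_val, ZMod.val_one]
  have hcheck : ∀ j i, ∑ i' ∈ univ.erase i, ((H j i').val : ℝ) * ν i' - ((H j i).val : ℝ) * ν i =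
      slack j₁ j₂ (.inl (j, i)) ν := by
    intro j i
    rw [sum_erase_eq_sub (mem_univ i), slack_inl_apply]
    simp only [hval, ite_mul, one_mul, zero_mul, sum_ite_mem, univ_inter]
    split_ifs <;> ring
  rw [mem_fundamentalCone_iff]
  constructor
  · rintro ⟨hnn, hrow⟩ (⟨j, i⟩ | i)
    · exact hcheck j i ▸ sub_nonneg.2 (hrow j i)
    · exact hnn i
  · exact fun h => ⟨fun i => h (.inr i),
      fun j i => sub_nonneg.1 ((hcheck j i).symm ▸ h (.inl (j, i)))⟩

end NormalGraph

/-- for a cycle code, the Newton polyhedron of the edge zeta function of the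
normal graph — the convex cone generated by the exponent vectors of monomials with nonzero
coefficient — is the fundamental cone `K(H)`. -/
theorem stmt10 {r n : ℕ} (H : Matrix (Fin r) (Fin n) (ZMod 2))
    (j₁ j₂ : Fin n → Fin r) (hj : ∀ i, j₁ i ≠ j₂ i)
    (hH : ∀ j i, H j i = 1 ↔ (j = j₁ i ∨ j = j₂ i))
    (ζ : MvPowerSeries (Fin n) ℤ)
    (hζ : ζ * Matrix.det (1 - normalGraphUM j₁ j₂) = 1) :
    (Submodule.span {c : ℝ // 0 ≤ c}
        {x : Fin n → ℝ | ∃ p : Fin n → ℕ,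
          MvPowerSeries.coeff (Finsupp.equivFunOnFinite.symm p) ζ ≠ 0 ∧
          x = fun i => (p i : ℝ)} : Set (Fin n → ℝ)) =
      {ν | InFundCone H ν} := by
  rw [← NormalGraph.arcMatrix_dartLabel] at hζ
  have hK : {ν | InFundCone H ν} = (NormalGraph.fundamentalCone j₁ j₂ : Set (Fin n → ℝ)) :=
    Set.ext fun ν => NormalGraph.inFundCone_iff_mem_fundamentalCone hH
  rw [LabelledDigraph.eq_zeta_of_mul_det_eq_one _ hζ, hK,
    ← NormalGraph.hull_support_zeta_eq_fundamentalCone hj]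
end

section
/- Suppose every column of H has even weight, let T = T(H) be its Tanner graph with edge set E, and let d_i denote the degree of the bit node x_i. Let Ĉ = {y ∈ F₂^E : for every vertex v of T, the sum over F₂ of y_e over all edges e incident to v is zero} be the cycle code on T, and let Ĉ' = {y ∈ Ĉ : for each i, y takes the same value on all edges incident to x_i}. Define φ: Ĉ' → F₂ⁿ by letting φ(y)_i be the common value of y on the edges incident to x_i. Then φ is an injective F₂-linear map whose image is exactly C = {c ∈ F₂ⁿ : Hcᵀ = 0}; in other words, C is (isomorphic to) the punctured subcode φ(Ĉ') of the cycle code Ĉ. -/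
open Finset

instance tannerGraphAdjDecidable {R I : Type*} (H : Matrix R I (ZMod 2)) :
    DecidableRel (TannerGraph H).Adj := fun v w =>
  match v, w with
  | Sum.inl i, Sum.inr j => inferInstanceAs (Decidable (H j i = 1))
  | Sum.inr j, Sum.inl i => inferInstanceAs (Decidable (H j i = 1))
  | Sum.inl _, Sum.inl _ => inferInstanceAs (Decidable False)
  | Sum.inr _, Sum.inr _ => inferInstanceAs (Decidable False)

/-- The edge of the Tanner graph joining bit node `x_i` and check node `f_j`. -/
def tannerEdge {R I : Type*} (H : Matrix R I (ZMod 2)) (i : I) (j : R) (hj : H j i = 1) :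
    (TannerGraph H).edgeSet :=
  ⟨s(Sum.inl i, Sum.inr j), by exact hj⟩


/-!
Every edge of the Tanner graph joins exactly one bit node `x_i` to a check node, so the words
that are constant around each bit node are exactly the pullbacks `c ∘ bitNode` of vectors
`c ∈ F₂ⁿ`. The incidence sum of such a word at the check node `f_j` is `(H c)_j`, and at the bit
node `x_i` it is `d_i c_i = 0` because the column weights are even. Hence `Ĉ'` is the image of
`C` under `c ↦ c ∘ bitNode`, and `φ` inverts this map on `C` because every bit node has an edge.
-/

lemma Fintype.sum_subtype_eq_sum_dite {ι M : Type*} [Fintype ι] [AddCommMonoid M] (p : ι → Prop)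
    [DecidablePred p] (f : {x // p x} → M) :
    ∑ x, f x = ∑ x, if h : p x then f ⟨x, h⟩ else 0 := by
  rw [Finset.sum_dite, Finset.sum_const_zero, add_zero]
  exact Fintype.sum_equiv (Equiv.subtypeEquivRight (by simp)) _ _ (fun _ => rfl)

def SimpleGraph.cycleCode {V : Type*} [DecidableEq V] (G : SimpleGraph V) [Fintype G.edgeSet] :
    Set (G.edgeSet → ZMod 2) :=
  {y | ∀ v, ∑ e : G.edgeSet, (if v ∈ (e : Sym2 V) then y e else 0) = 0}

namespace TannerGraph

variable {R I : Type*} (H : Matrix R I (ZMod 2))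

lemma exists_eq_tannerEdge (e : (TannerGraph H).edgeSet) :
    ∃ (i : I) (j : R) (hj : H j i = 1), e = tannerEdge H i j hj := by
  obtain ⟨e, he⟩ := e
  induction e using Sym2.ind with
  | _ a b =>
    rw [SimpleGraph.mem_edgeSet] at he
    rcases a with i | j <;> rcases b with i' | j'
    · exact he.elim
    · exact ⟨i, j', he, rfl⟩
    · exact ⟨i', j, he, Subtype.ext Sym2.eq_swap⟩
    · exact he.elim

variable {H} in
lemma tannerEdge_inj {i i' : I} {j j' : R} {hj : H j i = 1} {hj' : H j' i' = 1} :
    tannerEdge H i j hj = tannerEdge H i' j' hj' ↔ i = i' ∧ j = j' := by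
  simp [tannerEdge, Subtype.ext_iff]

noncomputable def edgeEquiv : {p : I × R // H p.2 p.1 = 1} ≃ (TannerGraph H).edgeSet :=
  Equiv.ofBijective (fun p => tannerEdge H p.1.1 p.1.2 p.2)
    ⟨fun _ _ h => Subtype.ext (Prod.ext_iff.2 (tannerEdge_inj.1 h)), fun e => by
      obtain ⟨i, j, hj, rfl⟩ := exists_eq_tannerEdge H e
      exact ⟨⟨(i, j), hj⟩, rfl⟩⟩

noncomputable def bitNode (e : (TannerGraph H).edgeSet) : I :=
  ((edgeEquiv H).symm e).1.1

@[simp]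
lemma bitNode_tannerEdge (i : I) (j : R) (hj : H j i = 1) :
    bitNode H (tannerEdge H i j hj) = i :=
  congrArg (fun p => p.1.1) ((edgeEquiv H).symm_apply_apply ⟨(i, j), hj⟩)

@[simp]
lemma coe_tannerEdge (i : I) (j : R) (hj : H j i = 1) :
    (tannerEdge H i j hj : Sym2 (I ⊕ R)) = s(Sum.inl i, Sum.inr j) :=
  rfl

variable [Fintype I] [Fintype R]

lemma sum_edgeSet {M : Type*} [AddCommMonoid M] (F : (TannerGraph H).edgeSet → M) :
    ∑ e, F e = ∑ i, ∑ j, if hj : H j i = 1 then F (tannerEdge H i j hj) else 0 := by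
  rw [← (edgeEquiv H).sum_comp, Fintype.sum_subtype_eq_sum_dite, Fintype.sum_prod_type]
  rfl

variable [DecidableEq I] [DecidableEq R]

lemma sum_incident_checkNode (c : I → ZMod 2) (j : R) :
    ∑ e : (TannerGraph H).edgeSet,
      (if (Sum.inr j : I ⊕ R) ∈ (e : Sym2 (I ⊕ R)) then c (bitNode H e) else 0) =
      H.mulVec c j := by
  rw [sum_edgeSet]
  have h01 : ∀ a b : ZMod 2, a * b = if a = 1 then b else 0 := by decide
  simp only [coe_tannerEdge, bitNode_tannerEdge, Sym2.mem_iff, reduceCtorEq, Sum.inr.injEq,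
    false_or, dite_eq_ite, Matrix.mulVec, dotProduct]
  refine Finset.sum_congr rfl fun i _ => ?_
  rw [Finset.sum_eq_single j (fun j' _ hj' => by simp [Ne.symm hj']) (by simp), h01]
  simp

lemma sum_incident_bitNode (c : I → ZMod 2) (i : I) :
    ∑ e : (TannerGraph H).edgeSet,
      (if (Sum.inl i : I ⊕ R) ∈ (e : Sym2 (I ⊕ R)) then c (bitNode H e) else 0) =
      #{j | H j i = 1} • c i := by
  rw [sum_edgeSet]
  simp only [coe_tannerEdge, bitNode_tannerEdge, Sym2.mem_iff, reduceCtorEq, Sum.inl.injEq,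
    or_false, dite_eq_ite]
  rw [Finset.sum_comm]
  simp [Finset.sum_ite]

lemma comp_bitNode_mem_cycleCode_iff (heven : ∀ i, Even #{j | H j i = 1}) (c : I → ZMod 2) :
    c ∘ bitNode H ∈ (TannerGraph H).cycleCode ↔ H.mulVec c = 0 := by
  simp only [SimpleGraph.cycleCode, Set.mem_ofPred_eq, Function.comp_apply]
  refine ⟨fun h => funext fun j => (sum_incident_checkNode H c j).symm.trans (h (Sum.inr j)), ?_⟩
  rintro hc (i | j)
  · rw [sum_incident_bitNode, nsmul_eq_mul, (heven i).natCast_zmod_two, zero_mul]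
  · rw [sum_incident_checkNode, hc, Pi.zero_apply]

end TannerGraph

/-- for a bit-even Tanner graph (with each bit node of positive degree), the
map `φ` sending `y ∈ Ĉ'` to the vector of common values at the bit nodes is an injective
`F₂`-linear map from `Ĉ'` onto `C`; i.e. `C` is the punctured subcode `φ(Ĉ')` of the
cycle code `Ĉ` on `T(H)`. -/
theorem stmt13 {r n : ℕ} (H : Matrix (Fin r) (Fin n) (ZMod 2))
    (heven : ∀ i, Even (Finset.univ.filter (fun j : Fin r => H j i = 1)).card)
    (hpos : ∀ i, ∃ j, H j i = 1)
    -- `Chat` is the cycle code on `T(H)`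
    (Chat : Set ((TannerGraph H).edgeSet → ZMod 2))
    (hChat : Chat = {y | ∀ v : Fin n ⊕ Fin r,
      ∑ e : (TannerGraph H).edgeSet, (if v ∈ (e : Sym2 (Fin n ⊕ Fin r)) then y e else 0) = 0})
    -- `Chat'` is the subcode of words constant on the edges at each bit node
    (Chat' : Set ((TannerGraph H).edgeSet → ZMod 2))
    (hChat' : Chat' = {y ∈ Chat | ∀ (i : Fin n) (j j' : Fin r)
      (hj : H j i = 1) (hj' : H j' i = 1),
      y (tannerEdge H i j hj) = y (tannerEdge H i j' hj')})
    -- `φ y i` is the common value of `y` on the edges incident to `x_i`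
    (φ : ((TannerGraph H).edgeSet → ZMod 2) → (Fin n → ZMod 2))
    (hφ : ∀ y ∈ Chat', ∀ (i : Fin n) (j : Fin r) (hj : H j i = 1),
      φ y i = y (tannerEdge H i j hj)) :
    Set.InjOn φ Chat' ∧
    (∀ y ∈ Chat', ∀ z ∈ Chat', φ (y + z) = φ y + φ z) ∧
    (∀ y ∈ Chat', ∀ a : ZMod 2, φ (a • y) = a • φ y) ∧
    φ '' Chat' = {c : Fin n → ZMod 2 | H.mulVec c = 0} := by
  have hlift (c : Fin n → ZMod 2) : c ∘ TannerGraph.bitNode H ∈ Chat' ↔ H.mulVec c = 0 := by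
    simp only [hChat', hChat, Set.mem_ofPred_eq, Function.comp_apply,
      TannerGraph.bitNode_tannerEdge, implies_true, and_true]
    exact TannerGraph.comp_bitNode_mem_cycleCode_iff H heven c
  have hrepr : ∀ y ∈ Chat', φ y ∘ TannerGraph.bitNode H = y := by
    intro y hy
    funext e
    obtain ⟨i, j, hj, rfl⟩ := TannerGraph.exists_eq_tannerEdge H e
    simp [hφ y hy i j hj]
  have hleft : Set.LeftInvOn φ (· ∘ TannerGraph.bitNode H) {c | H.mulVec c = 0} := by
    intro c hc
    funext i
    obtain ⟨j, hj⟩ := hpos i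
    simp [hφ _ ((hlift c).2 hc) i j hj]
  have hChat'_eq : Chat' = (· ∘ TannerGraph.bitNode H) '' {c | H.mulVec c = 0} := by
    ext y
    refine ⟨fun hy => ⟨φ y, (hlift _).1 ((hrepr y hy).symm ▸ hy), hrepr y hy⟩, ?_⟩
    rintro ⟨c, hc, rfl⟩
    exact (hlift c).2 hc
  rw [hChat'_eq]
  refine ⟨Set.LeftInvOn.injOn hleft.rightInvOn_image, ?_, ?_, hleft.image_image⟩
  · rintro _ ⟨c, hc : H.mulVec c = 0, rfl⟩ _ ⟨d, hd : H.mulVec d = 0, rfl⟩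
    have hcd : H.mulVec (c + d) = 0 := by rw [Matrix.mulVec_add, hc, hd, add_zero]
    exact (hleft hcd).trans (by rw [hleft hc, hleft hd])
  · rintro _ ⟨c, hc : H.mulVec c = 0, rfl⟩ a
    have hac : H.mulVec (a • c) = 0 := by rw [Matrix.mulVec_smul, hc, smul_zero]
    exact (hleft hac).trans (by rw [hleft hc])
end
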